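/- arXiv:1702.04380 — 8 statements merged into one kernel-verified Lean document; each statement's English description precedes it below -/
import Mathlib

section
/- Let V, W be real vector spaces, F : V → W linear, J an endomorphism of V with J² = pJ + qI (p, q positive reals), and P an endomorphism of W with P² = P + I. If F ∘ J = P ∘ F, then (p² − q² + 3q − pq − p − 1)·F(X) = 0 for all X ∈ V. In particular, if p ≠ qφ + (1 − φ) and p ≠ q(1 − φ) + φ where φ = (1 + √5)/2, then F = 0. -/
theorem metallic_to_golden_constancy
    {V W : Type*} [AddCommGroup V] [Module ℝ V] [AddCommGroup W] [Module ℝ W]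
    (F : V →ₗ[ℝ] W) (J : V →ₗ[ℝ] V) (P : W →ₗ[ℝ] W)
    (p q : ℝ) (hp : 0 < p) (hq : 0 < q)
    (hJ : ∀ x : V, J (J x) = p • J x + q • x)
    (hP : ∀ y : W, P (P y) = P y + y)
    (hF : ∀ x : V, F (J x) = P (F x)) :
    (∀ X : V, (p ^ 2 - q ^ 2 + 3 * q - p * q - p - 1) • F X = 0) ∧
    ((p ≠ q * ((1 + Real.sqrt 5) / 2) + (1 - (1 + Real.sqrt 5) / 2) ∧
      p ≠ q * (1 - (1 + Real.sqrt 5) / 2) + (1 + Real.sqrt 5) / 2) → F = 0) := by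
  have key : ∀ X : V, (p ^ 2 - q ^ 2 + 3 * q - p * q - p - 1) • F X = 0 := by
    intro X
    set y := F X with hy
    set a := P y with ha
    have e1 : p • a + q • y = a + y := by
      have h1 : F (J (J X)) = P (P (F X)) := by rw [hF, hF]
      have h2 : F (J (J X)) = p • a + q • y := by
        rw [hJ, map_add, map_smul, map_smul, hF, ha, hy]
      rw [h2, hP] at h1
      exact h1
    have hPa : P a = a + y := hP y
    have e2 : p • (a + y) + q • a = (a + y) + a := by
      have h := congrArg P e1
      rw [map_add, map_add, map_smul, map_smul, hPa, ← ha] at h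
      exact h
    linear_combination (norm := module) (2 - p - q) • e1 + (p - 1) • e2
  refine ⟨key, fun ⟨h1, h2⟩ => ?_⟩
  have hs5 : Real.sqrt 5 ^ 2 = 5 := Real.sq_sqrt (by norm_num)
  have hfac : (p ^ 2 - q ^ 2 + 3 * q - p * q - p - 1)
      = (p - (q * ((1 + Real.sqrt 5) / 2) + (1 - (1 + Real.sqrt 5) / 2)))
        * (p - (q * (1 - (1 + Real.sqrt 5) / 2) + (1 + Real.sqrt 5) / 2)) := by
    nlinarith [hs5, sq_nonneg (Real.sqrt 5)]
  have hne : (p ^ 2 - q ^ 2 + 3 * q - p * q - p - 1) ≠ 0 := by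
    rw [hfac]
    exact mul_ne_zero (sub_ne_zero.mpr h1) (sub_ne_zero.mpr h2)
  ext X
  have := key X
  rcases smul_eq_zero.mp this with h | h
  · exact absurd h hne
  · simpa using h
end

section
/- Let V, W be real vector spaces, F : V → W linear, J an endomorphism of V with J² = pJ + qI (p, q positive reals), and φ an endomorphism of W with φ² = I (almost product structure). If F ∘ J = φ ∘ F, then (p² − q² + 2q − 1)·F(X) = 0 for all X ∈ V. In particular, if p² ≠ (q − 1)², then F = 0. -/
theorem metallic_to_almost_product_constancy
    {V W : Type*} [AddCommGroup V] [Module ℝ V] [AddCommGroup W] [Module ℝ W]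
    (F : V →ₗ[ℝ] W) (J : V →ₗ[ℝ] V) (φ : W →ₗ[ℝ] W)
    (p q : ℝ) (hp : 0 < p) (hq : 0 < q)
    (hJ : ∀ x : V, J (J x) = p • J x + q • x)
    (hφ : ∀ y : W, φ (φ y) = y)
    (hF : ∀ x : V, F (J x) = φ (F x)) :
    (∀ X : V, (p ^ 2 - q ^ 2 + 2 * q - 1) • F X = 0) ∧
    (p ^ 2 ≠ (q - 1) ^ 2 → F = 0) := by
  have key : ∀ X : V, (p ^ 2 - q ^ 2 + 2 * q - 1) • F X = 0 := by
    intro X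
    -- p • φ (F X) = (1 - q) • F X
    have h1 : p • φ (F X) = (1 - q) • F X := by
      have := hF (J X)
      rw [hJ X, hF X, hφ] at this
      -- this : F (p • J X + q • X) = F X
      rw [map_add, map_smul, map_smul, hF X] at this
      have h' : p • φ (F X) = F X - q • F X := by
        rw [eq_sub_iff_add_eq]
        exact this
      rw [h', sub_smul, one_smul]
    have h2 : p • F X = (1 - q) • φ (F X) := by
      have := congrArg φ h1
      rwa [map_smul, map_smul, hφ] at this
    have h3 : (p * p) • F X = ((1 - q) * (1 - q)) • F X := by
      rw [mul_smul, h2, smul_comm, h1, mul_smul]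
    have : ((p * p) - (1 - q) * (1 - q)) • F X = 0 := by
      rw [sub_smul, h3, sub_self]
    have heq : p ^ 2 - q ^ 2 + 2 * q - 1 = (p * p) - (1 - q) * (1 - q) := by ring
    rw [heq]
    exact this
  refine ⟨key, fun hne => ?_⟩
  ext X
  have h := key X
  have hc : p ^ 2 - q ^ 2 + 2 * q - 1 ≠ 0 := by
    intro h0
    apply hne
    nlinarith [h0]
  simpa [smul_eq_zero, hc] using h
end

section
/- Let V, W be real vector spaces, F : V → W linear, J an endomorphism of V with J² = pJ + qI (p, q positive reals), and J' an endomorphism of W with J'² = −I (almost complex structure). If F ∘ J = J' ∘ F, then (p² + (q + 1)²)·F(X) = 0 for all X ∈ V; since p, q > 0, F = 0. -/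
theorem metallic_to_almost_complex_constancy
    {V W : Type*} [AddCommGroup V] [Module ℝ V] [AddCommGroup W] [Module ℝ W]
    (F : V →ₗ[ℝ] W) (J : V →ₗ[ℝ] V) (J' : W →ₗ[ℝ] W)
    (p q : ℝ) (hp : 0 < p) (hq : 0 < q)
    (hJ : ∀ x : V, J (J x) = p • J x + q • x)
    (hJ' : ∀ y : W, J' (J' y) = -y)
    (hF : ∀ x : V, F (J x) = J' (F x)) :
    (∀ X : V, (p ^ 2 + (q + 1) ^ 2) • F X = 0) ∧ F = 0 := by
  have key : ∀ x : V, p • J' (F x) = -((q + 1) • F x) := by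
    intro x
    have h1 : F (J (J x)) = -(F x) := by
      rw [hF, hF, hJ']
    have h2 : F (J (J x)) = p • J' (F x) + q • F x := by
      rw [hJ]; simp [hF]
    rw [h1] at h2
    rw [eq_sub_of_add_eq h2.symm]; module
  have main : ∀ X : V, (p ^ 2 + (q + 1) ^ 2) • F X = 0 := by
    intro x
    -- apply J' to key
    have h3 : p • J' (J' (F x)) = -((q + 1) • J' (F x)) := by
      have := congrArg J' (key x)
      simpa [map_smul, map_neg] using this
    rw [hJ'] at h3
    -- h3 : p • (-(F x)) = -((q+1) • J' (F x))
    -- multiply key by (q+1), h3 by ... combine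
    have h4 : (q + 1) • (p • J' (F x)) = (q + 1) • (-((q + 1) • F x)) :=
      congrArg _ (key x)
    have h5 : p • (p • (-(F x))) = p • (-((q + 1) • J' (F x))) := congrArg _ h3
    have : (p ^ 2 + (q + 1) ^ 2) • F x
        = -(p • (p • (-(F x)))) + -( (q + 1) • (-((q + 1) • F x))) := by module
    rw [this, h5, ← h4]
    module
  refine ⟨main, ?_⟩
  ext x
  have := main x
  have hpos : p ^ 2 + (q + 1) ^ 2 ≠ 0 := by positivity
  simpa [smul_eq_zero, hpos] using this
end

section
/- Let V, W be real vector spaces, F : V → W linear, J' an endomorphism of V with J'² = −I, and J an endomorphism of W with J² = pJ + qI for positive reals p, q. If F ∘ J' = J ∘ F, then F = 0. -/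
theorem almost_complex_to_metallic_constancy
    {V W : Type*} [AddCommGroup V] [Module ℝ V] [AddCommGroup W] [Module ℝ W]
    (F : V →ₗ[ℝ] W) (J' : V →ₗ[ℝ] V) (J : W →ₗ[ℝ] W)
    (p q : ℝ) (hp : 0 < p) (hq : 0 < q)
    (hJ' : ∀ x : V, J' (J' x) = -x)
    (hJ : ∀ y : W, J (J y) = p • J y + q • y)
    (hF : ∀ x : V, F (J' x) = J (F x)) :
    F = 0 := by
  ext x
  have h1 : -F x = p • F (J' x) + q • F x := by
    rw [← map_neg, ← hJ' x, hF, hF, hJ]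
  have h2 : -F (J' x) = p • (-F x) + q • F (J' x) := by
    have := congrArg F (hJ' (J' x))
    rw [hF, hF, hJ, ← hF, hJ' x, map_neg, map_neg] at this
    exact this.symm
  have key : (p^2 + (1+q)^2) • F x = 0 := by
    linear_combination (norm := module) (-(1+q) : ℝ) • h1 + (p : ℝ) • h2
  have hne : (p^2 + (1+q)^2) ≠ 0 := by positivity
  have := smul_eq_zero.mp key
  simpa [hne] using this
end

section
/- Let V, W be real vector spaces with W carrying an almost contact structure: an endomorphism φ, a vector ξ ∈ W, and a linear functional η on W satisfying φ² = −I + η ⊗ ξ, φξ = 0, η∘φ = 0, η(ξ) = 1. Let J be an endomorphism of V with J² = pJ + qI, p, q positive reals, and F : V → W linear with F ∘ J = φ ∘ F. Then F = 0. -/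
theorem metallic_to_almost_contact_constancy
    {V W : Type*} [AddCommGroup V] [Module ℝ V] [AddCommGroup W] [Module ℝ W]
    (F : V →ₗ[ℝ] W) (J : V →ₗ[ℝ] V)
    (φ : W →ₗ[ℝ] W) (ξ : W) (η : W →ₗ[ℝ] ℝ)
    (p q : ℝ) (hp : 0 < p) (hq : 0 < q)
    (hJ : ∀ x : V, J (J x) = p • J x + q • x)
    (hφ2 : ∀ y : W, φ (φ y) = -y + η y • ξ)
    (hφξ : φ ξ = 0)
    (hηφ : ∀ y : W, η (φ y) = 0)
    (hηξ : η ξ = 1)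
    (hF : ∀ x : V, F (J x) = φ (F x)) :
    F = 0 := by
  ext x
  simp only [LinearMap.zero_apply]
  -- key equation from F(J(Jx)) computed two ways
  have eq1 : p • φ (F x) + q • F x = -(F x) + η (F x) • ξ := by
    have h1 : F (J (J x)) = φ (φ (F x)) := by rw [hF, hF]
    have h2 : F (J (J x)) = p • φ (F x) + q • F x := by
      rw [hJ, map_add, map_smul, map_smul, hF]
    rw [h2, hφ2] at h1
    exact h1
  -- η (F x) = 0
  have hη : η (F x) = 0 := by
    have := congrArg η eq1
    simp [map_add, map_smul, hηφ, hηξ] at this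
    exact this.resolve_left hq.ne'
  rw [hη, zero_smul, add_zero] at eq1
  -- p • φ (F x) = -(1+q) • F x
  have eq2 : p • φ (F x) = -((1 + q) • F x) := by
    have : p • φ (F x) = -(F x) - q • F x := by
      linear_combination (norm := module) eq1
    rw [this]; module
  -- apply φ
  have eq3 : p • φ (φ (F x)) = -((1 + q) • φ (F x)) := by
    have := congrArg φ eq2
    simpa [map_smul, map_neg] using this
  rw [hφ2, hη, zero_smul, add_zero] at eq3
  -- p • (-(F x)) = -((1+q)) • φ (F x); multiply eq2 into this
  have eq4 : (p * p) • (-(F x)) = ((1 + q) * (1 + q)) • F x := by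
    have h := congrArg (fun w => p • w) eq3
    simp only [smul_smul, smul_neg] at h ⊢
    rw [h]
    rw [show p * (1 + q) = (1 + q) * p by ring, ← smul_smul, eq2]
    module
  have hcoef : (p * p + (1 + q) * (1 + q)) ≠ 0 := by positivity
  have : (p * p + (1 + q) * (1 + q)) • F x = 0 := by
    have := eq4
    rw [smul_neg, neg_eq_iff_add_eq_zero, ← add_smul] at this
    linear_combination (norm := module) this
  exact (smul_eq_zero.mp this).resolve_left hcoef
end

section
/- Let V carry an almost contact structure (φ, ξ, η) with φ² = −I + η ⊗ ξ, φξ = 0, η∘φ = 0, η(ξ) = 1, and let W carry a metallic structure J with J² = pJ + qI for positive reals p, q. If F : V → W is linear with F ∘ φ = J ∘ F, then F = 0. -/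
/-!
Since `φ ξ = 0`, `F ξ` lies in the kernel of `J`, which is trivial because `J² = pJ + qI` with
`q ≠ 0`. Hence `J² (F x) = F (φ² x) = -F x` for every `x`. But a metallic structure admits no
vector with `J² a = -a` other than `0`: combining `J² a = -a` with `J² a = p J a + q a` gives
`(p² + (1 + q)²) a = 0`.
-/

section Metallic

variable {W : Type*} [AddCommGroup W] [Module ℝ W] {J : W →ₗ[ℝ] W} {p q : ℝ}

theorem eq_zero_of_metallic_of_map_eq_zero (hJ : ∀ y : W, J (J y) = p • J y + q • y)
    (hq : q ≠ 0) {y : W} (hy : J y = 0) : y = 0 := by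
  have hqy : q • y = 0 := by simpa [hy] using (hJ y).symm
  exact (smul_eq_zero.mp hqy).resolve_left hq

theorem eq_zero_of_metallic_of_sq_eq_neg (hJ : ∀ y : W, J (J y) = p • J y + q • y)
    (hq : q ≠ -1) {a : W} (ha : J (J a) = -a) : a = 0 := by
  have hJa : p • J a = -(1 + q) • a := by
    linear_combination (norm := module) ha - hJ a
  have hJJa : p • J (J a) = -(1 + q) • J a := by
    simpa only [map_smul] using congrArg J hJa
  have hsum : (p ^ 2 + (1 + q) ^ 2) • a = 0 := by
    linear_combination (norm := module) (-p) • hJJa + p ^ 2 • ha + (1 + q) • hJa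
  have hcoef : p ^ 2 + (1 + q) ^ 2 ≠ 0 := by
    have : (1 + q) ^ 2 ≠ 0 := pow_ne_zero 2 fun h => hq (by linarith)
    positivity
  exact (smul_eq_zero.mp hsum).resolve_left hcoef

end Metallic

theorem almost_contact_to_metallic_constancy_general
    {V W : Type*} [AddCommGroup V] [Module ℝ V] [AddCommGroup W] [Module ℝ W]
    (F : V →ₗ[ℝ] W)
    (φ : V →ₗ[ℝ] V) (ξ : V) (η : V →ₗ[ℝ] ℝ)
    (J : W →ₗ[ℝ] W)
    (p q : ℝ) (hq : 0 < q)
    (hφ2 : ∀ x : V, φ (φ x) = -x + η x • ξ)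
    (hφξ : φ ξ = 0)
    (hJ : ∀ y : W, J (J y) = p • J y + q • y)
    (hF : ∀ x : V, F (φ x) = J (F x)) :
    F = 0 := by
  have hFξ : F ξ = 0 :=
    eq_zero_of_metallic_of_map_eq_zero hJ hq.ne' (by rw [← hF, hφξ, map_zero])
  refine LinearMap.ext fun x => eq_zero_of_metallic_of_sq_eq_neg hJ (by linarith) ?_
  rw [← hF, ← hF, hφ2, map_add, map_neg, map_smul, hFξ, smul_zero, add_zero]

theorem almost_contact_to_metallic_constancy
    {V W : Type*} [AddCommGroup V] [Module ℝ V] [AddCommGroup W] [Module ℝ W]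
    (F : V →ₗ[ℝ] W)
    (φ : V →ₗ[ℝ] V) (ξ : V) (η : V →ₗ[ℝ] ℝ)
    (J : W →ₗ[ℝ] W)
    (p q : ℝ) (hp : 0 < p) (hq : 0 < q)
    (hφ2 : ∀ x : V, φ (φ x) = -x + η x • ξ)
    (hφξ : φ ξ = 0)
    (hηφ : ∀ x : V, η (φ x) = 0)
    (hηξ : η ξ = 1)
    (hJ : ∀ y : W, J (J y) = p • J y + q • y)
    (hF : ∀ x : V, F (φ x) = J (F x)) :
    F = 0 :=
  almost_contact_to_metallic_constancy_general F φ ξ η J p q hq hφ2 hφξ hJ hF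
end

section
/- Let W carry an almost paracontact structure: an endomorphism φ', a vector ξ' ∈ W, and a linear functional η' on W with φ'² = I − η' ⊗ ξ', φ'ξ' = 0, η'∘φ' = 0, η'(ξ') = 1. Let J be an endomorphism of a real vector space V with J² = pJ + qI (p, q positive reals), and let F : V → W be linear with F ∘ J = φ' ∘ F. If p² ≠ (q − 1)², then F = 0. -/
theorem metallic_to_almost_paracontact_constancy
    {V W : Type*} [AddCommGroup V] [Module ℝ V] [AddCommGroup W] [Module ℝ W]
    (F : V →ₗ[ℝ] W) (J : V →ₗ[ℝ] V)
    (φ' : W →ₗ[ℝ] W) (ξ' : W) (η' : W →ₗ[ℝ] ℝ)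
    (p q : ℝ) (hp : 0 < p) (hq : 0 < q)
    (hJ : ∀ x : V, J (J x) = p • J x + q • x)
    (hφ2 : ∀ y : W, φ' (φ' y) = y - η' y • ξ')
    (hφξ : φ' ξ' = 0)
    (hηφ : ∀ y : W, η' (φ' y) = 0)
    (hηξ : η' ξ' = 1)
    (hF : ∀ x : V, F (J x) = φ' (F x))
    (hpq : p ^ 2 ≠ (q - 1) ^ 2) :
    F = 0 := by
  ext x
  simp only [LinearMap.zero_apply]
  have key : p • φ' (F x) + q • F x = F x - η' (F x) • ξ' := by
    have h1 : φ' (φ' (F x)) = F (J (J x)) := by rw [hF, hF]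
    rw [hφ2, hJ] at h1
    simp only [map_add, map_smul, hF] at h1
    exact h1.symm
  -- apply η'
  have hη : q * η' (F x) = 0 := by
    have := congrArg η' key
    simp only [map_add, map_smul, map_sub, hηφ, hηξ, mul_zero, zero_add, smul_eq_mul,
      mul_one] at this
    linarith
  have hη0 : η' (F x) = 0 := by
    rcases mul_eq_zero.mp hη with h | h
    · exact absurd h (ne_of_gt hq)
    · exact h
  have key2 : p • φ' (F x) = (1 - q) • F x := by
    rw [hη0] at key
    have : p • φ' (F x) = F x - q • F x := by
      rw [zero_smul, sub_zero] at key; linear_combination (norm := module) key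
    rw [this]; module
  -- apply φ'
  have key3 : p • F x = (1 - q) • φ' (F x) := by
    have := congrArg φ' key2
    simp only [map_smul, hφ2, hη0, zero_smul, sub_zero] at this
    exact this
  have final : (p ^ 2 - (1 - q) ^ 2) • F x = 0 := by
    have h4 : p • (p • F x) = p • ((1 - q) • φ' (F x)) := congrArg (p • ·) key3
    rw [smul_comm p (1 - q), key2, smul_smul, smul_smul] at h4
    have : (p * p - (1 - q) * (1 - q)) • F x = 0 := by
      rw [sub_smul, h4, sub_self]
    convert this using 2 <;> ring
  have hne : p ^ 2 - (1 - q) ^ 2 ≠ 0 := by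
    intro h
    apply hpq
    have : p ^ 2 = (1 - q) ^ 2 := by linarith
    rw [this]; ring
  exact (smul_eq_zero.mp final).resolve_left hne
end

section
/- Let P be an endomorphism of a real vector space V with P² = P + I (Golden structure), and J an endomorphism of a real vector space W with J² = pJ + qI for positive reals p, q. If F : V → W is linear with F ∘ P = J ∘ F, then F = 0 whenever p ≠ qφ + (1−φ) and p ≠ q(1−φ) + φ, where φ = (1+√5)/2. -/
theorem golden_to_metallic_constancy
    {V W : Type*} [AddCommGroup V] [Module ℝ V] [AddCommGroup W] [Module ℝ W]
    (F : V →ₗ[ℝ] W) (P : V →ₗ[ℝ] V) (J : W →ₗ[ℝ] W)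
    (p q : ℝ) (hp : 0 < p) (hq : 0 < q)
    (hP : ∀ x : V, P (P x) = P x + x)
    (hJ : ∀ y : W, J (J y) = p • J y + q • y)
    (hF : ∀ x : V, F (P x) = J (F x))
    (h1 : p ≠ q * ((1 + Real.sqrt 5) / 2) + (1 - (1 + Real.sqrt 5) / 2))
    (h2 : p ≠ q * (1 - (1 + Real.sqrt 5) / 2) + (1 + Real.sqrt 5) / 2) :
    F = 0 := by
  have h5 : Real.sqrt 5 ^ 2 = 5 := Real.sq_sqrt (by norm_num)
  set s := Real.sqrt 5 with hs
  have key : (p - (q * ((1 + s) / 2) + (1 - (1 + s) / 2))) *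
      (p - (q * (1 - (1 + s) / 2) + (1 + s) / 2)) =
      p ^ 2 - p - p * q + 3 * q - q ^ 2 - 1 := by
    linear_combination (-(q - 1) ^ 2 / 4) * h5
  have hc : p ^ 2 - p - p * q + 3 * q - q ^ 2 - 1 ≠ 0 := by
    rw [← key]
    exact mul_ne_zero (sub_ne_zero.mpr h1) (sub_ne_zero.mpr h2)
  ext x
  have e1 : J (J (F x)) = J (F x) + F x := by
    have h := congrArg F (hP x)
    rw [map_add] at h
    rw [hF (P x), hF x] at h
    exact h
  have e1' : p • J (F x) + q • F x = J (F x) + F x := by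
    rw [← hJ]; exact e1
  have e2 : (p - 1) • J (F x) = (1 - q) • F x := by
    linear_combination (norm := module) e1'
  have e3 : (p - 1) • (p • J (F x) + q • F x) = (1 - q) • J (F x) := by
    have h := congrArg J e2
    rw [map_smul, map_smul, hJ] at h
    exact h
  have e4 : (p ^ 2 - p - p * q + 3 * q - q ^ 2 - 1) • F x = (0 : W) := by
    linear_combination (norm := module) ((1 - q) - (p - 1) * p) • e2 + (p - 1) • e3
  have := (smul_eq_zero.mp e4).resolve_left hc
  simpa using this
end
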